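/- arXiv:2405.10067 — 3 statements merged into one kernel-verified Lean document; each statement's English description precedes it below -/
import Mathlib

section
/- Let V_i ∈ ℝ^{p_i×k}, V_j ∈ ℝ^{p_j×k}, V_k ∈ ℝ^{p_k×k} have orthonormal columns, let D_{ij}, D_{ik} ∈ ℝ^{k×k} be diagonal, and set Y_{ij} = V_i D_{ij} V_j^⊤, Y_{ik} = V_i D_{ik} V_k^⊤, and B = V_k D_{ik}^+ D_{ij} V_j^⊤. Then ‖Y_{ik} B‖_F² ≤ ‖Y_{ij}‖_F². Consequently, the directed R² value never exceeds the proportion of variation: V_{ik→ij} = ‖Y_{ik}B‖_F²/‖X_{ij}‖_F² ≤ ‖Y_{ij}‖_F²/‖X_{ij}‖_F² = V_{ij} for any predictor matrix. -/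
open Matrix

noncomputable def frobSq {m n : ℕ} (A : Matrix (Fin m) (Fin n) ℝ) : ℝ :=
  ∑ i, ∑ j, (A i j) ^ 2

noncomputable def diagPinv {k : ℕ} (d : Fin k → ℝ) : Matrix (Fin k) (Fin k) ℝ :=
  Matrix.diagonal fun l => (d l)⁻¹

lemma frobSq_eq_trace {m n : ℕ} (A : Matrix (Fin m) (Fin n) ℝ) :
    frobSq A = Matrix.trace (Aᵀ * A) := by
  simp [frobSq, Matrix.trace, Matrix.mul_apply, Matrix.diag, pow_two]
  rw [Finset.sum_comm]

lemma frobSq_sandwich {pi pj k : ℕ} (Vi : Matrix (Fin pi) (Fin k) ℝ)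
    (Vj : Matrix (Fin pj) (Fin k) ℝ) (d : Fin k → ℝ)
    (hVi : Viᵀ * Vi = 1) (hVj : Vjᵀ * Vj = 1) :
    frobSq (Vi * Matrix.diagonal d * Vjᵀ) = ∑ l, (d l) ^ 2 := by
  rw [frobSq_eq_trace]
  have : (Vi * Matrix.diagonal d * Vjᵀ)ᵀ * (Vi * Matrix.diagonal d * Vjᵀ)
      = Vj * (Matrix.diagonal d * Matrix.diagonal d) * Vjᵀ := by
    simp only [Matrix.transpose_mul, Matrix.transpose_transpose,
      Matrix.diagonal_transpose, Matrix.mul_assoc]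
    rw [← Matrix.mul_assoc Viᵀ Vi, hVi, Matrix.one_mul]
  rw [this, Matrix.trace_mul_comm, ← Matrix.mul_assoc, hVj, Matrix.one_mul,
    Matrix.diagonal_mul_diagonal, Matrix.trace_diagonal]
  simp [pow_two]

/-- With `Y_{ij} = Vi D_{ij} Vjᵀ`, `Y_{ik} = Vi D_{ik} Vkᵀ` and
`B = Vk D_{ik}⁺ D_{ij} Vjᵀ`, one has `‖Y_{ik} B‖_F² ≤ ‖Y_{ij}‖_F²`; consequently
the directed R² value never exceeds the proportion of variation:
`‖Y_{ik} B‖_F² / ‖X_{ij}‖_F² ≤ ‖Y_{ij}‖_F² / ‖X_{ij}‖_F²` for any predictor. -/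
theorem directed_r2_le_prop_variation {pi pj pk k : ℕ}
    (Vi : Matrix (Fin pi) (Fin k) ℝ) (Vj : Matrix (Fin pj) (Fin k) ℝ)
    (Vk : Matrix (Fin pk) (Fin k) ℝ)
    (dij dik : Fin k → ℝ)
    (hVi : Viᵀ * Vi = 1) (hVj : Vjᵀ * Vj = 1) (hVk : Vkᵀ * Vk = 1) :
    frobSq ((Vi * Matrix.diagonal dik * Vkᵀ)
        * (Vk * diagPinv dik * Matrix.diagonal dij * Vjᵀ))
      ≤ frobSq (Vi * Matrix.diagonal dij * Vjᵀ) ∧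
    ∀ X : Matrix (Fin pi) (Fin pj) ℝ,
      frobSq ((Vi * Matrix.diagonal dik * Vkᵀ)
          * (Vk * diagPinv dik * Matrix.diagonal dij * Vjᵀ)) / frobSq X
        ≤ frobSq (Vi * Matrix.diagonal dij * Vjᵀ) / frobSq X := by
  have hprod : (Vi * Matrix.diagonal dik * Vkᵀ)
      * (Vk * diagPinv dik * Matrix.diagonal dij * Vjᵀ)
      = Vi * Matrix.diagonal (fun l => dik l * ((dik l)⁻¹ * dij l)) * Vjᵀ := by
    unfold diagPinv
    simp only [Matrix.mul_assoc]
    rw [← Matrix.mul_assoc Vkᵀ Vk, hVk, Matrix.one_mul,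
      ← Matrix.mul_assoc (Matrix.diagonal fun l => (dik l)⁻¹),
      Matrix.diagonal_mul_diagonal,
      ← Matrix.mul_assoc (Matrix.diagonal dik), Matrix.diagonal_mul_diagonal]
  have hmain : frobSq ((Vi * Matrix.diagonal dik * Vkᵀ)
      * (Vk * diagPinv dik * Matrix.diagonal dij * Vjᵀ))
      ≤ frobSq (Vi * Matrix.diagonal dij * Vjᵀ) := by
    rw [hprod, frobSq_sandwich Vi Vj _ hVi hVj, frobSq_sandwich Vi Vj _ hVi hVj]
    apply Finset.sum_le_sum
    intro l _
    rcases eq_or_ne (dik l) 0 with h | h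
    · simp [h]; positivity
    · rw [← mul_assoc, mul_inv_cancel₀ h, one_mul]
  refine ⟨hmain, fun X => ?_⟩
  have hX : (0:ℝ) ≤ frobSq X := by
    apply Finset.sum_nonneg; intro i _; apply Finset.sum_nonneg; intro j _; positivity
  rw [div_eq_mul_inv, div_eq_mul_inv]
  exact mul_le_mul_of_nonneg_right hmain (inv_nonneg.mpr hX)
end

section
/- Let m ∈ ℝ^p and w > 0, and suppose max_j |m^{(j)}| > w. Then u* = ST_w(m) / ‖ST_w(m)‖_2 (soft-thresholding applied entrywise, then normalized) is a minimizer of f(u) = (1/2)‖u − m‖_2² + w‖u‖_1 over the unit sphere {u ∈ ℝ^p : ‖u‖_2 = 1}; equivalently, u* maximizes ⟨m, u⟩ − w‖u‖_1 over the unit sphere. -/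
/-- The soft-thresholding operator `ST_β(x) = sign(x) · max(|x| − β, 0)`. -/
noncomputable def softThresh (β x : ℝ) : ℝ := Real.sign x * max (|x| - β) 0

lemma softThresh_abs (β x : ℝ) (hβ : 0 < β) :
    |softThresh β x| = max (|x| - β) 0 := by
  unfold softThresh
  rcases le_or_gt (|x| - β) 0 with h | h
  · simp [max_eq_right h]
  · have hx : x ≠ 0 := by
      intro hx0; simp [hx0] at h; linarith
    rcases lt_or_gt_of_ne hx with hneg | hpos
    · rw [Real.sign_of_neg hneg, neg_one_mul, abs_neg,
        abs_of_nonneg (le_max_right _ _)]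
    · rw [Real.sign_of_pos hpos, one_mul, abs_of_nonneg (le_max_right _ _)]

lemma softThresh_mul_self (β x : ℝ) :
    x * softThresh β x = |x| * max (|x| - β) 0 := by
  unfold softThresh
  rcases lt_trichotomy x 0 with h | h | h
  · rw [Real.sign_of_neg h]; rw [abs_of_neg h]; ring
  · simp [h]
  · rw [Real.sign_of_pos h]; rw [abs_of_pos h]; ring

lemma softThresh_sq (β x : ℝ) (hβ : 0 < β) :
    softThresh β x ^ 2 = (max (|x| - β) 0) ^ 2 := by
  rw [← sq_abs, softThresh_abs _ _ hβ]

/-- ADMM subproblem for a sparse factor column on the sphere, in the case where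
some entry of `m` exceeds the threshold `w`: the normalized soft-thresholded
vector `u* = ST_w(m)/‖ST_w(m)‖₂` lies on the unit sphere and minimizes
`(1/2)‖u − m‖₂² + w‖u‖₁` over the unit sphere; equivalently, it maximizes
`⟨m, u⟩ − w‖u‖₁` there. -/
theorem admm_subproblem_sparse_factor_above_threshold {p : ℕ}
    (m : Fin p → ℝ) (w : ℝ) (hw : 0 < w) (hmax : ∃ j, w < |m j|) :
    (∑ j, (softThresh w (m j) / Real.sqrt (∑ i, (softThresh w (m i)) ^ 2)) ^ 2 = 1) ∧
    (∀ u : Fin p → ℝ, ∑ j, (u j) ^ 2 = 1 →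
      (1 / 2) * (∑ j, (softThresh w (m j) / Real.sqrt (∑ i, (softThresh w (m i)) ^ 2) - m j) ^ 2)
          + w * ∑ j, |softThresh w (m j) / Real.sqrt (∑ i, (softThresh w (m i)) ^ 2)|
        ≤ (1 / 2) * (∑ j, (u j - m j) ^ 2) + w * ∑ j, |u j|) ∧
    (∀ u : Fin p → ℝ, ∑ j, (u j) ^ 2 = 1 →
      (∑ j, m j * u j) - w * ∑ j, |u j|
        ≤ (∑ j, m j * (softThresh w (m j) / Real.sqrt (∑ i, (softThresh w (m i)) ^ 2)))
          - w * ∑ j, |softThresh w (m j) / Real.sqrt (∑ i, (softThresh w (m i)) ^ 2)|) := by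
  set s : Fin p → ℝ := fun j => softThresh w (m j) with hs
  set Q : ℝ := ∑ i, s i ^ 2 with hQ
  have hQpos : 0 < Q := by
    obtain ⟨j, hj⟩ := hmax
    have hj' : 0 < s j ^ 2 := by
      rw [hs]; simp only []
      rw [softThresh_sq _ _ hw]
      have : 0 < max (|m j| - w) 0 := lt_max_of_lt_left (by linarith)
      positivity
    refine Finset.sum_pos' (fun i _ => sq_nonneg _) ⟨j, Finset.mem_univ j, hj'⟩
  set S : ℝ := Real.sqrt Q with hSdef
  have hSpos : 0 < S := Real.sqrt_pos.mpr hQpos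
  have hS2 : S ^ 2 = Q := Real.sq_sqrt hQpos.le
  -- Part 1
  have h1 : ∑ j, (s j / S) ^ 2 = 1 := by
    rw [Finset.sum_congr rfl (fun j _ => div_pow (s j) S 2), ← Finset.sum_div, ← hQ, hS2,
      div_self hQpos.ne']
  -- value at u*
  have hval : (∑ j, m j * (s j / S)) - w * ∑ j, |s j / S| = S := by
    have key : ∀ j, m j * (s j / S) - w * |s j / S| = s j ^ 2 / S := by
      intro j
      rw [abs_div, abs_of_pos hSpos]
      rw [show m j * (s j / S) = (m j * s j) / S from by ring]
      rw [hs]; simp only []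
      rw [softThresh_mul_self, softThresh_abs _ _ hw, softThresh_sq _ _ hw]
      have hM : |m j| * max (|m j| - w) 0 - w * max (|m j| - w) 0
          = max (|m j| - w) 0 ^ 2 := by
        rcases le_or_gt (|m j| - w) 0 with h | h
        · rw [max_eq_right h]; ring
        · rw [max_eq_left h.le]; ring
      rw [show w * (max (|m j| - w) 0 / S) = w * max (|m j| - w) 0 / S from
        (mul_div_assoc _ _ _).symm, ← sub_div, hM]
    calc (∑ j, m j * (s j / S)) - w * ∑ j, |s j / S|
        = ∑ j, (m j * (s j / S) - w * |s j / S|) := by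
          rw [Finset.sum_sub_distrib, Finset.mul_sum]
      _ = ∑ j, s j ^ 2 / S := Finset.sum_congr rfl (fun j _ => key j)
      _ = Q / S := by rw [← Finset.sum_div, ← hQ]
      _ = S := by rw [← hS2]; field_simp
  -- Part 3
  have h3 : ∀ u : Fin p → ℝ, ∑ j, (u j) ^ 2 = 1 →
      (∑ j, m j * u j) - w * ∑ j, |u j| ≤ S := by
    intro u hu
    have step : ∀ j, m j * u j - w * |u j| ≤ |s j| * |u j| := by
      intro j
      have h1' : m j * u j ≤ |m j| * |u j| := by
        calc m j * u j ≤ |m j * u j| := le_abs_self _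
          _ = |m j| * |u j| := abs_mul _ _
      have h2' : (|m j| - w) * |u j| ≤ max (|m j| - w) 0 * |u j| :=
        mul_le_mul_of_nonneg_right (le_max_left _ _) (abs_nonneg _)
      rw [hs]; simp only []
      rw [softThresh_abs _ _ hw]
      nlinarith [abs_nonneg (u j)]
    calc (∑ j, m j * u j) - w * ∑ j, |u j|
        = ∑ j, (m j * u j - w * |u j|) := by
          rw [Finset.sum_sub_distrib, Finset.mul_sum]
      _ ≤ ∑ j, |s j| * |u j| := Finset.sum_le_sum (fun j _ => step j)
      _ ≤ Real.sqrt (∑ j, |s j| ^ 2) * Real.sqrt (∑ j, |u j| ^ 2) :=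
          Real.sum_mul_le_sqrt_mul_sqrt _ _ _
      _ = S := by
          simp only [sq_abs]
          rw [hu, Real.sqrt_one, mul_one, ← hQ]
  refine ⟨h1, ?_, fun u hu => (h3 u hu).trans_eq hval.symm⟩
  intro u hu
  have expand : ∀ v : Fin p → ℝ, ∑ j, (v j - m j) ^ 2
      = ∑ j, (v j) ^ 2 - 2 * ∑ j, m j * v j + ∑ j, (m j) ^ 2 := by
    intro v
    rw [Finset.sum_congr rfl (fun j _ =>
      show (v j - m j) ^ 2 = v j ^ 2 - 2 * (m j * v j) + m j ^ 2 from by ring),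
      Finset.sum_add_distrib, Finset.sum_sub_distrib, ← Finset.mul_sum]
  have e1 := expand (fun j => s j / S)
  have e2 := expand u
  have h3u := h3 u hu
  rw [e1, e2, h1, hu]
  have := hval
  nlinarith [h3u, hval]
end

section
/- Let m ∈ ℝ^p with m ≠ 0 and w > 0, and suppose max_j |m^{(j)}| ≤ w. Let j_0 ∈ argmax_j |m^{(j)}| and set u* = sign(m^{(j_0)}) e_{j_0}, the signed standard unit vector. Then u* is a minimizer of f(u) = (1/2)‖u − m‖_2² + w‖u‖_1 over the unit sphere {u ∈ ℝ^p : ‖u‖_2 = 1}; equivalently, u* maximizes ⟨m, u⟩ − w‖u‖_1 over the unit sphere. -/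
/-- ADMM subproblem for a sparse factor column on the sphere, in the case where
no entry of `m` exceeds the threshold `w`: for `j₀` an index of maximal `|m j|`,
the signed standard unit vector `u* = sign(m j₀) e_{j₀}` lies on the unit sphere
and minimizes `(1/2)‖u − m‖₂² + w‖u‖₁` over the unit sphere; equivalently, it
maximizes `⟨m, u⟩ − w‖u‖₁` there. -/
theorem admm_subproblem_sparse_factor_below_threshold {p : ℕ}
    (m : Fin p → ℝ) (w : ℝ) (hw : 0 < w) (hm : m ≠ 0)
    (hle : ∀ j, |m j| ≤ w) (j0 : Fin p) (hj0 : ∀ j, |m j| ≤ |m j0|) :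
    (∑ j, ((if j = j0 then Real.sign (m j0) else 0 : ℝ)) ^ 2 = 1) ∧
    (∀ u : Fin p → ℝ, ∑ j, (u j) ^ 2 = 1 →
      (1 / 2) * (∑ j, ((if j = j0 then Real.sign (m j0) else 0 : ℝ) - m j) ^ 2)
          + w * ∑ j, |(if j = j0 then Real.sign (m j0) else 0 : ℝ)|
        ≤ (1 / 2) * (∑ j, (u j - m j) ^ 2) + w * ∑ j, |u j|) ∧
    (∀ u : Fin p → ℝ, ∑ j, (u j) ^ 2 = 1 →
      (∑ j, m j * u j) - w * ∑ j, |u j|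
        ≤ (∑ j, m j * (if j = j0 then Real.sign (m j0) else 0 : ℝ))
          - w * ∑ j, |(if j = j0 then Real.sign (m j0) else 0 : ℝ)|) := by
  obtain ⟨jne, hjne⟩ : ∃ j, m j ≠ 0 := by
    by_contra h; push_neg at h; exact hm (funext h)
  have hmj0 : m j0 ≠ 0 := by
    intro h
    have h2 := hj0 jne
    rw [h, abs_zero] at h2
    exact hjne (abs_eq_zero.mp (le_antisymm h2 (abs_nonneg _)))
  set s := Real.sign (m j0) with hs
  have hsval : m j0 * s = |m j0| := by
    rcases hmj0.lt_or_gt with h | h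
    · rw [hs, Real.sign_of_neg h, abs_of_neg h]; ring
    · rw [hs, Real.sign_of_pos h, abs_of_pos h]; ring
  have habs : |s| = 1 := by
    rcases hmj0.lt_or_gt with h | h
    · rw [hs, Real.sign_of_neg h]; norm_num
    · rw [hs, Real.sign_of_pos h]; norm_num
  have hs2 : s ^ 2 = 1 := by
    have := congrArg (· ^ 2) habs
    simpa [sq_abs] using this
  -- sphere membership of u*
  have hsum2 : ∑ j, ((if j = j0 then s else 0 : ℝ)) ^ 2 = 1 := by
    rw [Finset.sum_congr rfl (fun j _ => by
      show ((if j = j0 then s else 0 : ℝ)) ^ 2 = if j = j0 then s ^ 2 else 0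
      split <;> simp)]
    rw [Finset.sum_ite_eq' Finset.univ j0 (fun _ => s ^ 2)]
    simp [hs2]
  have hsumabs : ∑ j, |(if j = j0 then s else 0 : ℝ)| = 1 := by
    rw [Finset.sum_congr rfl (fun j _ => by
      show |(if j = j0 then s else 0 : ℝ)| = if j = j0 then |s| else 0
      split <;> simp)]
    rw [Finset.sum_ite_eq' Finset.univ j0 (fun _ => |s|)]
    simp [habs]
  have hsummul : ∑ j, m j * (if j = j0 then s else 0 : ℝ) = |m j0| := by
    rw [Finset.sum_congr rfl (fun j _ => by
      show m j * (if j = j0 then s else 0 : ℝ) = if j = j0 then m j0 * s else 0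
      split <;> simp_all)]
    rw [Finset.sum_ite_eq' Finset.univ j0 (fun _ => m j0 * s)]
    simp [hsval]
  -- key maximization inequality
  have key : ∀ u : Fin p → ℝ, ∑ j, (u j) ^ 2 = 1 →
      (∑ j, m j * u j) - w * ∑ j, |u j| ≤ |m j0| - w := by
    intro u hu
    have h1 : ∀ j, |u j| ≤ 1 := by
      intro j
      have hsq : (u j) ^ 2 ≤ 1 := by
        rw [← hu]
        exact Finset.single_le_sum (fun i _ => sq_nonneg (u i)) (Finset.mem_univ j)
      nlinarith [abs_nonneg (u j), sq_abs (u j)]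
    have h2 : (1 : ℝ) ≤ ∑ j, |u j| := by
      rw [← hu]
      apply Finset.sum_le_sum
      intro j _
      nlinarith [sq_abs (u j), h1 j, abs_nonneg (u j)]
    have h3 : ∑ j, m j * u j ≤ |m j0| * ∑ j, |u j| := by
      rw [Finset.mul_sum]
      apply Finset.sum_le_sum
      intro j _
      calc m j * u j ≤ |m j * u j| := le_abs_self _
        _ = |m j| * |u j| := abs_mul _ _
        _ ≤ |m j0| * |u j| := mul_le_mul_of_nonneg_right (hj0 j) (abs_nonneg _)
    nlinarith [hle j0, h2, h3]
  -- expansion of the quadratic objective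
  have expand : ∀ u : Fin p → ℝ, ∑ j, (u j) ^ 2 = 1 →
      (1 / 2) * (∑ j, (u j - m j) ^ 2) + w * ∑ j, |u j|
      = (1 / 2) * (1 + ∑ j, (m j) ^ 2)
        - ((∑ j, m j * u j) - w * ∑ j, |u j|) := by
    intro u hu
    have e1 : ∑ j, (u j - m j) ^ 2
        = ∑ j, ((u j) ^ 2 - 2 * (m j * u j) + (m j) ^ 2) :=
      Finset.sum_congr rfl (fun j _ => by ring)
    rw [e1, Finset.sum_add_distrib, Finset.sum_sub_distrib, ← Finset.mul_sum, hu]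
    ring
  refine ⟨hsum2, ?_, ?_⟩
  · intro u hu
    have hmax := key u hu
    rw [expand u hu, expand (fun j => if j = j0 then s else 0) hsum2]
    simp only [hsummul, hsumabs]
    linarith
  · intro u hu
    rw [hsummul, hsumabs]
    have := key u hu
    linarith
end
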